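/- Let α ∈ ℂ, U ⊆ ℂ open, and let (q₁, p₁, q₂, p₂) be differentiable functions on U solving system (3) with parameter α, and assume p₁(t) ≠ 0 for all t ∈ U. Then the functions (q₁ + (α + 1/2)/p₁, p₁, q₂, p₂) solve system (3) with parameter −1 − α on U. (This is the Bäcklund transformation s₀ of Theorem on symmetries of system (3).) -/

import Mathlib

/-- `(q₁,p₁,q₂,p₂)` solves system (3) with parameter `α` on `U`:
`q₁' = q₁² + p₂`, `p₁' = -2 q₁ p₁ - α - 1/2`, `q₂' = -(1/2) p₂² + p₁ + t/2`, `p₂' = q₂`. -/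
def SolvesSys3 (α : ℂ) (U : Set ℂ) (q1 p1 q2 p2 : ℂ → ℂ) : Prop :=
  ∀ t ∈ U,
    HasDerivAt q1 (q1 t ^ 2 + p2 t) t ∧
    HasDerivAt p1 (-2 * q1 t * p1 t - α - 1/2) t ∧
    HasDerivAt q2 (-(1/2) * p2 t ^ 2 + p1 t + t / 2) t ∧
    HasDerivAt p2 (q2 t) t

/-!
Put `c = α + 1/2` and `Q = q₁ + c / p₁`. Since `p₁' = -2 q₁ p₁ - c`, the quotient rule gives
`(c / p₁)' = c (2 q₁ p₁ + c) / p₁² = 2 q₁ (c / p₁) + (c / p₁)²`, so the Riccati equation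
`q₁' = q₁² + p₂` becomes `Q' = Q² + p₂`. Substituting `q₁ = Q - c / p₁` into the equation for
`p₁` gives `p₁' = -2 Q p₁ + c`, which is the same equation with `c` replaced by `-c`, i.e. with
`α` replaced by `-1 - α`. The equations for `q₂` and `p₂` do not involve `q₁` or `α`.
-/

theorem HasDerivAt.add_div_of_riccati {𝕜 : Type*} [NontriviallyNormedField 𝕜] {q p : 𝕜 → 𝕜}
    {r c t : 𝕜} (hq : HasDerivAt q (q t ^ 2 + r) t)
    (hp : HasDerivAt p (-2 * q t * p t - c) t) (hp0 : p t ≠ 0) :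
    HasDerivAt (fun s => q s + c / p s) ((q t + c / p t) ^ 2 + r) t := by
  refine (hq.add ((hasDerivAt_const t c).div hp hp0)).congr_deriv ?_
  field_simp
  ring

theorem stmt2 (α : ℂ) (U : Set ℂ) (q1 p1 q2 p2 : ℂ → ℂ)
    (h : SolvesSys3 α U q1 p1 q2 p2) (hp : ∀ t ∈ U, p1 t ≠ 0) :
    SolvesSys3 (-1 - α) U (fun t => q1 t + (α + 1/2) / p1 t) p1 q2 p2 := by
  intro t ht
  obtain ⟨hq1, hp1, hq2, hp2⟩ := h t ht
  have hp1' : HasDerivAt p1 (-2 * q1 t * p1 t - (α + 1/2)) t := by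
    simpa only [sub_sub] using hp1
  refine ⟨hq1.add_div_of_riccati hp1' (hp t ht), hp1.congr_deriv ?_, hq2, hp2⟩
  field_simp [hp t ht]
  ring
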